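/- arXiv:2106.02822 — 3 statements merged into one kernel-verified Lean document; each statement's English description precedes it below -/
import Mathlib

section
/- Let A ∈ ℝ^{n×n}, B_d ∈ ℝ^{n×m}, C ∈ ℝ^{p×n}, D_d ∈ ℝ^{p×m} with D_d D_dᵀ = I, and let Y ⪰ 0 solve the Riccati equation of Lemma 1 with L* = Y Cᵀ + B_d D_dᵀ. Then for any gain L ∈ ℝ^{n×p} such that A − LC is Hurwitz, the controllability Gramian Q_L of (A − LC, B_d − L D_d) satisfies trace(C Q_L Cᵀ) ≥ trace(C Y Cᵀ), with equality when L = L*. -/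
/-!
Put `Δ = Q_L - Y` and `L* = Y Cᵀ + B_d D_dᵀ`. Completing the square with the Riccati equation
and `D_d D_dᵀ = I` gives the Lyapunov equation
`(A - LC) Δ + Δ (A - LC)ᵀ + (L - L*) (L - L*)ᵀ = 0`.
For a Hurwitz matrix `M` and a solution of `M Δ + Δ Mᵀ + W = 0` with `W ⪰ 0`, the function
`t ↦ xᵀ e^{tM} Δ e^{tMᵀ} x` has derivative `-(e^{tMᵀ}x)ᵀ W (e^{tMᵀ}x) ≤ 0` and tends to `0`
(on a generalized eigenvector of `Mᵀ` for `μ`, `e^{tMᵀ}x` is `e^{tμ}` times a polynomial in `t`),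
so `xᵀ Δ x ≥ 0`; when `W = 0` the same holds for `-Δ`. Applied to the rows of `C` this gives
`trace (C Δ Cᵀ) ≥ 0`, with equality when `L = L*`.
-/

open Matrix NormedSpace Filter Topology

attribute [local instance] Matrix.linftyOpNormedRing Matrix.linftyOpNormedAlgebra

theorem Complex.tendsto_exp_mul_mul_pow_atTop {μ : ℂ} (hμ : μ.re < 0) (j : ℕ) :
    Tendsto (fun t : ℝ => Complex.exp (t * μ) * (t : ℂ) ^ j) atTop (𝓝 0) := by
  rw [tendsto_zero_iff_norm_tendsto_zero]
  refine (tendsto_rpow_mul_exp_neg_mul_atTop_nhds_zero j (-μ.re) (by linarith)).congr' ?_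
  filter_upwards [eventually_ge_atTop (0 : ℝ)] with t ht
  simp [Complex.norm_exp, abs_of_nonneg ht, mul_comm]

namespace Matrix

variable {ι : Type*} [Fintype ι] [DecidableEq ι]

theorem exp_mulVec_eq_sum_of_pow_mulVec_eq_zero {𝕂 : Type*} [RCLike 𝕂]
    (N : Matrix ι ι 𝕂) {k : ℕ} {v : ι → 𝕂} (hv : N ^ k *ᵥ v = 0) :
    exp N *ᵥ v = ∑ j ∈ Finset.range k, (j.factorial : 𝕂)⁻¹ • (N ^ j *ᵥ v) := by
  let φ : Matrix ι ι 𝕂 →L[𝕂] (ι → 𝕂) :=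
    LinearMap.toContinuousLinearMap ((LinearMap.applyₗ v).comp Matrix.toLin'.toLinearMap)
  have hφ : ∀ M, φ M = M *ᵥ v := fun _ => rfl
  refine ((exp_series_hasSum_exp' (𝕂 := 𝕂) N).mapL φ).unique
    (hasSum_sum_of_ne_finset_zero fun j hj => ?_) |>.trans (Finset.sum_congr rfl fun j _ => ?_)
  · have hk : k ≤ j := by simpa using hj
    rw [hφ, smul_mulVec, ← Nat.sub_add_cancel hk, pow_add, ← mulVec_mulVec, hv, mulVec_zero,
      smul_zero]
  · rw [hφ, smul_mulVec]

theorem exp_smul_mulVec_eq_sum_of_pow_sub_mulVec_eq_zero (B : Matrix ι ι ℂ) {μ : ℂ}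
    {k : ℕ} {v : ι → ℂ} (hv : (B - μ • 1) ^ k *ᵥ v = 0) (t : ℝ) :
    exp ((t : ℂ) • B) *ᵥ v = ∑ j ∈ Finset.range k,
      (Complex.exp (t * μ) * (t : ℂ) ^ j / j.factorial) • ((B - μ • 1) ^ j *ᵥ v) := by
  set N := B - μ • 1
  have hsplit : (t : ℂ) • B = algebraMap ℂ _ (t * μ) + (t : ℂ) • N := by
    simp [N, Algebra.algebraMap_eq_smul_one, smul_sub, smul_smul]
  have hscalar : exp (algebraMap ℂ (Matrix ι ι ℂ) (t * μ)) = algebraMap ℂ _ (exp (t * μ)) :=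
    (algebraMap_exp_comm _).symm
  have htN : ((t : ℂ) • N) ^ k *ᵥ v = 0 := by rw [smul_pow, smul_mulVec, hv, smul_zero]
  rw [hsplit, Matrix.exp_add_of_commute _ _ (Algebra.commute_algebraMap_left _ _), hscalar,
    ← mulVec_mulVec, exp_mulVec_eq_sum_of_pow_mulVec_eq_zero _ htN,
    Algebra.algebraMap_eq_smul_one, smul_mulVec, one_mulVec, Finset.smul_sum]
  refine Finset.sum_congr rfl fun j _ => ?_
  rw [smul_pow, smul_mulVec, smul_smul, smul_smul, Complex.exp_eq_exp_ℂ]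
  ring_nf

theorem tendsto_exp_smul_mulVec_of_forall_re_neg (B : Matrix ι ι ℂ)
    (hB : ∀ μ ∈ spectrum ℂ B, μ.re < 0) (v : ι → ℂ) :
    Tendsto (fun t : ℝ => exp ((t : ℂ) • B) *ᵥ v) atTop (𝓝 0) := by
  -- the vectors along which `exp (t • B)` decays form a submodule, and it contains every
  -- generalized eigenspace
  let decaying : Submodule ℂ (ι → ℂ) :=
    { carrier := {w | Tendsto (fun t : ℝ => exp ((t : ℂ) • B) *ᵥ w) atTop (𝓝 0)}
      add_mem' := fun ha hb => by simpa [mulVec_add] using ha.add hb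
      zero_mem' := by simp
      smul_mem' := fun c _ ha => by simpa [mulVec_smul] using ha.const_smul c }
  suffices ⊤ ≤ decaying from this Submodule.mem_top
  rw [← Module.End.iSup_maxGenEigenspace_eq_top (toLinAlgEquiv' B)]
  refine iSup_le fun μ w hw => ?_
  rcases eq_or_ne w 0 with rfl | hw0
  · exact decaying.zero_mem
  have hμ : μ.re < 0 := by
    refine hB μ ?_
    rw [← spectrum_toLin', ← Module.End.hasEigenvalue_iff_mem_spectrum]
    exact Module.End.HasUnifEigenvalue.lt zero_lt_one ((Submodule.ne_bot_iff _).2 ⟨w, hw, hw0⟩)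
  obtain ⟨k, hk⟩ := (Module.End.mem_maxGenEigenspace _ μ w).1 hw
  have hkv : (B - μ • 1) ^ k *ᵥ w = 0 := by
    rwa [← map_one (toLinAlgEquiv' (R := ℂ) (n := ι)), ← map_smul, ← map_sub, ← map_pow,
      toLinAlgEquiv'_apply] at hk
  show Tendsto _ _ _
  simp_rw [exp_smul_mulVec_eq_sum_of_pow_sub_mulVec_eq_zero B hkv]
  simpa using tendsto_finsetSum _ fun j _ =>
    ((Complex.tendsto_exp_mul_mul_pow_atTop hμ j).div_const (j.factorial : ℂ)).smul_const
      ((B - μ • 1) ^ j *ᵥ w)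

def IsHurwitz (A : Matrix ι ι ℝ) : Prop :=
  ∀ μ ∈ spectrum ℂ (A.map Complex.ofReal), μ.re < 0

theorem map_ofReal_exp_smul (A : Matrix ι ι ℝ) (t : ℝ) :
    (exp (t • A)).map Complex.ofReal = exp ((t : ℂ) • A.map Complex.ofReal) := by
  let φ : Matrix ι ι ℝ →+* Matrix ι ι ℂ := Complex.ofRealHom.mapMatrix
  have hφ : φ (t • A) = (t : ℂ) • A.map Complex.ofReal := by
    ext i j
    simp [φ]
  calc (exp (t • A)).map Complex.ofReal = φ (exp (t • A)) := rfl
    _ = exp (φ (t • A)) := map_exp φ (continuous_id.matrix_map Complex.continuous_ofReal) _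
    _ = exp ((t : ℂ) • A.map Complex.ofReal) := by rw [hφ]

theorem spectrum_transpose {R : Type*} [CommRing R] (A : Matrix ι ι R) :
    spectrum R Aᵀ = spectrum R A := by
  ext r
  have : algebraMap R (Matrix ι ι R) r - Aᵀ = (algebraMap R _ r - A)ᵀ := by
    rw [transpose_sub, Algebra.algebraMap_eq_smul_one, transpose_smul, transpose_one]
  rw [spectrum.mem_iff, spectrum.mem_iff, this, isUnit_transpose]

theorem IsHurwitz.transpose {A : Matrix ι ι ℝ} (hA : A.IsHurwitz) : Aᵀ.IsHurwitz := by
  intro μ hμ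
  rw [transpose_map, spectrum_transpose] at hμ
  exact hA μ hμ

theorem IsHurwitz.tendsto_exp_smul_mulVec {A : Matrix ι ι ℝ} (hA : A.IsHurwitz)
    (v : ι → ℝ) : Tendsto (fun t : ℝ => exp (t • A) *ᵥ v) atTop (𝓝 0) := by
  have hre : Continuous fun z : ι → ℂ => fun i => (z i).re :=
    continuous_pi fun i => Complex.continuous_re.comp (continuous_apply i)
  refine ((hre.tendsto 0).comp
    (tendsto_exp_smul_mulVec_of_forall_re_neg _ hA (fun i => (v i : ℂ)))).congr fun t => ?_
  ext i
  rw [Function.comp_apply, ← map_ofReal_exp_smul]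
  exact congrArg Complex.re (Complex.ofRealHom.map_mulVec _ v i).symm

theorem IsHurwitz.dotProduct_mulVec_nonneg_of_lyapunov {A X W : Matrix ι ι ℝ}
    (hA : A.IsHurwitz) (hW : W.PosSemidef) (hX : A * X + X * Aᵀ + W = 0)
    (v : ι → ℝ) : 0 ≤ v ⬝ᵥ X *ᵥ v := by
  let ℓ : Matrix ι ι ℝ →L[ℝ] ℝ := LinearMap.toContinuousLinearMap
    { toFun := fun Z => v ⬝ᵥ Z *ᵥ v
      map_add' := fun Z Z' => by simp [add_mulVec, dotProduct_add]
      map_smul' := fun c Z => by simp [smul_mulVec, dotProduct_smul] }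
  let F : ℝ → Matrix ι ι ℝ := fun t => exp (t • A)
  let H : ℝ → Matrix ι ι ℝ := fun t => exp (t • Aᵀ)
  let g : ℝ → ℝ := fun t => ℓ (F t * X * H t)
  have hℓ : ∀ t Z, ℓ (F t * Z * H t) = (H t *ᵥ v) ⬝ᵥ Z *ᵥ (H t *ᵥ v) := fun t Z => by
    have hFH : F t = (H t)ᵀ := by
      simp only [F, H, ← exp_transpose, transpose_smul, transpose_transpose]
    change v ⬝ᵥ (F t * Z * H t) *ᵥ v = _
    rw [hFH, mul_assoc, ← mulVec_mulVec, dotProduct_mulVec, vecMul_transpose, ← mulVec_mulVec]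
  have hg : ∀ t, HasDerivAt g (-((H t *ᵥ v) ⬝ᵥ W *ᵥ (H t *ᵥ v))) t := fun t => by
    have hF : HasDerivAt F (F t * A) t := hasDerivAt_exp_smul_const A t
    have hH : HasDerivAt H (Aᵀ * H t) t := hasDerivAt_exp_smul_const' Aᵀ t
    have hP : HasDerivAt (fun s => F s * X * H s) (-(F t * W * H t)) t := by
      refine ((hF.mul_const X).mul hH).congr_deriv ?_
      rw [eq_neg_of_add_eq_zero_right hX]
      noncomm_ring
    rw [← hℓ, ← map_neg]
    exact ℓ.hasFDerivAt.comp_hasDerivAt t hP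
  have hanti : Antitone g := antitone_of_deriv_nonpos (fun t => (hg t).differentiableAt)
    fun t => (hg t).deriv ▸ neg_nonpos.2 (by simpa using hW.dotProduct_mulVec_nonneg (H t *ᵥ v))
  have hlim : Tendsto g atTop (𝓝 0) := by
    have hq : Continuous fun x : ι → ℝ => x ⬝ᵥ X *ᵥ x := by fun_prop
    have := (hq.tendsto 0).comp (hA.transpose.tendsto_exp_smul_mulVec v)
    rw [mulVec_zero, dotProduct_zero] at this
    exact this.congr fun t => (hℓ t X).symm
  simpa [g, F, H, ℓ] using hanti.le_of_tendsto hlim 0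

theorem IsHurwitz.dotProduct_mulVec_eq_zero_of_lyapunov {A X : Matrix ι ι ℝ}
    (hA : A.IsHurwitz) (hX : A * X + X * Aᵀ = 0) (v : ι → ℝ) : v ⬝ᵥ X *ᵥ v = 0 := by
  have hpos := hA.dotProduct_mulVec_nonneg_of_lyapunov PosSemidef.zero (by rw [hX, add_zero]) v
  have hneg := hA.dotProduct_mulVec_nonneg_of_lyapunov (X := -X) PosSemidef.zero
    (by rw [mul_neg, neg_mul, ← neg_add, hX, neg_zero, add_zero]) v
  rw [neg_mulVec, dotProduct_neg, neg_nonneg] at hneg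
  exact le_antisymm hneg hpos

end Matrix

theorem Matrix.trace_mul_mul_transpose {ι κ R : Type*} [Fintype ι] [Fintype κ] [CommSemiring R]
    (C : Matrix κ ι R) (X : Matrix ι ι R) : (C * X * Cᵀ).trace = ∑ i, C i ⬝ᵥ X *ᵥ C i := by
  refine Finset.sum_congr rfl fun i _ => ?_
  rw [diag_apply, mul_apply', dotProduct_mulVec]
  rfl

theorem lyapunov_gramian_sub_riccati {ι κ ν R : Type*} [Fintype ι] [Fintype κ] [Fintype ν]
    [DecidableEq κ] [CommRing R]
    {A Y Q : Matrix ι ι R} {Bd : Matrix ι ν R} {C : Matrix κ ι R} {Dd : Matrix κ ν R}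
    {L : Matrix ι κ R} (hDd : Dd * Ddᵀ = 1) (hY : Y.IsSymm)
    (hRiccati : (A - Bd * Ddᵀ * C) * Y + Y * (A - Bd * Ddᵀ * C)ᵀ - Y * Cᵀ * C * Y
        + Bd * Bdᵀ - Bd * Ddᵀ * Dd * Bdᵀ = 0)
    (hQ : (A - L * C) * Q + Q * (A - L * C)ᵀ + (Bd - L * Dd) * (Bd - L * Dd)ᵀ = 0) :
    (A - L * C) * (Q - Y) + (Q - Y) * (A - L * C)ᵀ
      + (L - (Y * Cᵀ + Bd * Ddᵀ)) * (L - (Y * Cᵀ + Bd * Ddᵀ))ᵀ = 0 := by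
  calc _ = ((A - L * C) * Q + Q * (A - L * C)ᵀ + (Bd - L * Dd) * (Bd - L * Dd)ᵀ)
        - ((A - Bd * Ddᵀ * C) * Y + Y * (A - Bd * Ddᵀ * C)ᵀ - Y * Cᵀ * C * Y
          + Bd * Bdᵀ - Bd * Ddᵀ * Dd * Bdᵀ) + L * (1 - Dd * Ddᵀ) * Lᵀ := by
        simp only [transpose_sub, transpose_add, transpose_mul, transpose_transpose, hY.eq,
          Matrix.sub_mul, Matrix.mul_sub, Matrix.add_mul, Matrix.mul_add, Matrix.mul_assoc,
          Matrix.mul_one]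
        abel
    _ = 0 := by
        rw [hQ, hRiccati, hDd, sub_self, sub_self, Matrix.mul_zero, Matrix.zero_mul, add_zero]

/-- Optimality claim of Lemma 1: with `D_d D_dᵀ = I` and `Y ⪰ 0` solving the Riccati
equation, for any gain `L` making `A − LC` Hurwitz, the controllability Gramian `Q_L` of
`(A − LC, B_d − L D_d)` satisfies `trace(C Q_L Cᵀ) ≥ trace(C Y Cᵀ)`, with equality
when `L = L* = Y Cᵀ + B_d D_dᵀ`. -/
theorem h2_optimal_observer_gain {n m p : ℕ}
    (A : Matrix (Fin n) (Fin n) ℝ) (Bd : Matrix (Fin n) (Fin m) ℝ)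
    (C : Matrix (Fin p) (Fin n) ℝ) (Dd : Matrix (Fin p) (Fin m) ℝ)
    (Y : Matrix (Fin n) (Fin n) ℝ)
    (hDd : Dd * Ddᵀ = 1)
    (hY : Y.PosSemidef)
    (hRiccati : (A - Bd * Ddᵀ * C) * Y + Y * (A - Bd * Ddᵀ * C)ᵀ - Y * Cᵀ * C * Y
        + Bd * Bdᵀ - Bd * Ddᵀ * Dd * Bdᵀ = 0)
    (L : Matrix (Fin n) (Fin p) ℝ) (QL : Matrix (Fin n) (Fin n) ℝ)
    (hHur : ∀ μ ∈ spectrum ℂ ((A - L * C).map (Complex.ofReal)), μ.re < 0)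
    (hQL : (A - L * C) * QL + QL * (A - L * C)ᵀ
        + (Bd - L * Dd) * (Bd - L * Dd)ᵀ = 0) :
    (C * Y * Cᵀ).trace ≤ (C * QL * Cᵀ).trace ∧
      (L = Y * Cᵀ + Bd * Ddᵀ → (C * QL * Cᵀ).trace = (C * Y * Cᵀ).trace) := by
  have hM : (A - L * C).IsHurwitz := hHur
  have hΔ := lyapunov_gramian_sub_riccati hDd (isHermitian_iff_isSymm.1 hY.isHermitian)
    hRiccati hQL
  have hsplit : (C * QL * Cᵀ).trace = (C * Y * Cᵀ).trace + ∑ i, C i ⬝ᵥ (QL - Y) *ᵥ C i := by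
    rw [← trace_mul_mul_transpose, ← trace_add, ← Matrix.add_mul, ← Matrix.mul_add,
      add_sub_cancel]
  refine ⟨?_, fun hL => ?_⟩
  · have hW := posSemidef_self_mul_conjTranspose (L - (Y * Cᵀ + Bd * Ddᵀ))
    rw [conjTranspose_eq_transpose_of_trivial] at hW
    rw [hsplit, le_add_iff_nonneg_right]
    exact Finset.sum_nonneg fun i _ => hM.dotProduct_mulVec_nonneg_of_lyapunov hW hΔ _
  · subst hL
    rw [sub_self, Matrix.zero_mul, add_zero] at hΔ
    simp only [hsplit, hM.dotProduct_mulVec_eq_zero_of_lyapunov hΔ, Finset.sum_const_zero,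
      add_zero]
end

section
/- Let A ∈ ℝ^{n×n}, B ∈ ℝ^{n×m}, C ∈ ℝ^{p×n}, D ∈ ℝ^{p×m}. For any L ∈ ℝ^{n×p} and ΔL ∈ ℝ^{n×p}, and any s ∈ ℂ such that both sI − A + LC and sI − A + (L+ΔL)C are invertible, the following transfer-matrix identity holds: C(sI − A + (L+ΔL)C)⁻¹(B − (L+ΔL)D) + D = [I − C(sI − A + (L+ΔL)C)⁻¹ ΔL] · [C(sI − A + LC)⁻¹(B − LD) + D]. -/
open Matrix

/-- Abstract form of the multiplicative-perturbation identity: if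
`Ninv = Minv - Ninv * (ΔL * C) * Minv` (the resolvent identity), then the
transfer-matrix identity holds with `Minv`, `Ninv` as abstract matrices. -/
theorem perturbed_gain_aux {n m p : ℕ}
    (Minv Ninv : Matrix (Fin n) (Fin n) ℂ) (B : Matrix (Fin n) (Fin m) ℂ)
    (C : Matrix (Fin p) (Fin n) ℂ) (D : Matrix (Fin p) (Fin m) ℂ)
    (L ΔL : Matrix (Fin n) (Fin p) ℂ)
    (hres : Ninv = Minv - Ninv * (ΔL * C) * Minv) :
    C * Ninv * (B - (L + ΔL) * D) + D =
      ((1 : Matrix (Fin p) (Fin p) ℂ) - C * Ninv * ΔL)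
        * (C * Minv * (B - L * D) + D) := by
  calc C * Ninv * (B - (L + ΔL) * D) + D
      = C * (Minv - Ninv * (ΔL * C) * Minv) * (B - L * D) - C * Ninv * (ΔL * D) + D := by
        rw [← hres]
        simp only [Matrix.mul_sub, Matrix.sub_mul, Matrix.add_mul, Matrix.mul_add,
          Matrix.mul_assoc]
        abel
    _ = _ := by
        simp only [Matrix.mul_sub, Matrix.sub_mul, Matrix.add_mul, Matrix.mul_add,
          Matrix.one_mul, Matrix.mul_one, Matrix.mul_assoc]
        abel

/-- Multiplicative-perturbation identity (equation (7) of the paper): for any gains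
`L`, `ΔL` and any `s ∈ ℂ` at which the two shifted matrices are invertible,
`C(sI − A + (L+ΔL)C)⁻¹(B − (L+ΔL)D) + D
  = [I − C(sI − A + (L+ΔL)C)⁻¹ ΔL] · [C(sI − A + LC)⁻¹(B − LD) + D]`. -/
theorem perturbed_gain_transfer_identity {n m p : ℕ}
    (A : Matrix (Fin n) (Fin n) ℂ) (B : Matrix (Fin n) (Fin m) ℂ)
    (C : Matrix (Fin p) (Fin n) ℂ) (D : Matrix (Fin p) (Fin m) ℂ)
    (L ΔL : Matrix (Fin n) (Fin p) ℂ) (s : ℂ)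
    (h1 : IsUnit (s • (1 : Matrix (Fin n) (Fin n) ℂ) - A + L * C))
    (h2 : IsUnit (s • (1 : Matrix (Fin n) (Fin n) ℂ) - A + (L + ΔL) * C)) :
    C * (s • (1 : Matrix (Fin n) (Fin n) ℂ) - A + (L + ΔL) * C)⁻¹ * (B - (L + ΔL) * D) + D =
      ((1 : Matrix (Fin p) (Fin p) ℂ)
          - C * (s • (1 : Matrix (Fin n) (Fin n) ℂ) - A + (L + ΔL) * C)⁻¹ * ΔL)
        * (C * (s • (1 : Matrix (Fin n) (Fin n) ℂ) - A + L * C)⁻¹ * (B - L * D) + D) := by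
  set M := s • (1 : Matrix (Fin n) (Fin n) ℂ) - A + L * C with hM
  set N := s • (1 : Matrix (Fin n) (Fin n) ℂ) - A + (L + ΔL) * C with hN
  have hNM : N - M = ΔL * C := by
    rw [hM, hN, Matrix.add_mul]; abel
  have hMinv : M * M⁻¹ = 1 := mul_nonsing_inv M ((isUnit_iff_isUnit_det M).mp h1)
  have hNinv : N⁻¹ * N = 1 := nonsing_inv_mul N ((isUnit_iff_isUnit_det N).mp h2)
  have key : N⁻¹ * (ΔL * C) * M⁻¹ = M⁻¹ - N⁻¹ := by
    rw [← hNM, Matrix.mul_sub, Matrix.sub_mul, Matrix.mul_assoc N⁻¹ M M⁻¹, hMinv,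
      Matrix.mul_one, hNinv, Matrix.one_mul]
  have hres : N⁻¹ = M⁻¹ - N⁻¹ * (ΔL * C) * M⁻¹ := by
    rw [key, sub_sub_cancel]
  exact perturbed_gain_aux M⁻¹ N⁻¹ B C D L ΔL hres
end

section
/- Let A ∈ ℝ^{n×n} be Hurwitz, B ∈ ℝ^{n×m}, C ∈ ℝ^{p×n}, D ∈ ℝ^{p×m}, and γ > 0 with Dᵀ D − γ² I ≻ 0. If there exists a symmetric matrix X such that X A + Aᵀ X + Cᵀ C + (X B + Cᵀ D)(γ² I − Dᵀ D)⁻¹(Bᵀ X + Dᵀ C) ≻ 0, then for every ω ∈ ℝ and every unit vector u ∈ ℂ^m, ‖(C(iωI − A)⁻¹B + D)u‖ > γ; i.e., the minimum singular value of the transfer matrix G(iω) = C(iωI − A)⁻¹B + D exceeds γ at every frequency. -/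
/-!
Put `x = (iωI - A)⁻¹ B u`, so that `G(iω) u = C x + D u`, and `W = γ² I - DᵀD ≺ 0`.
Because `iω` is purely imaginary, the Lyapunov term `x* (XA + AᵀX) x` equals
`-2 Re (x* X B u)`, and completing the square in `u` gives
`‖C x + D u‖² = γ² ‖u‖² + x* M x - v* W v` with `v = W⁻¹ (BᵀX + DᵀC) x - u`,
where `M` is the Riccati matrix. Both `x* M x` and `-v* W v` are nonnegative, and one of
them is positive: if `x = 0` then `v = -u ≠ 0`.
-/

open Matrix
open scoped MatrixOrder ComplexOrder

namespace Matrix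

section OfReal

variable {ι κ ρ : Type*}

theorem map_ofReal_mul [Fintype ι] (M : Matrix ρ ι ℝ) (N : Matrix ι κ ℝ) :
    (M * N).map ((↑) : ℝ → ℂ) = M.map ((↑) : ℝ → ℂ) * N.map ((↑) : ℝ → ℂ) :=
  Matrix.map_mul (f := Complex.ofRealHom)

theorem map_ofReal_transpose (M : Matrix ρ ι ℝ) :
    Mᵀ.map ((↑) : ℝ → ℂ) = (M.map ((↑) : ℝ → ℂ))ᴴ :=
  conjTranspose_map _ fun a => (Complex.conj_ofReal a).symm

theorem map_ofReal_smul (r : ℝ) (M : Matrix ρ ι ℝ) :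
    (r • M).map ((↑) : ℝ → ℂ) = r • M.map ((↑) : ℝ → ℂ) :=
  Matrix.map_smul _ r (fun a => by rw [smul_eq_mul, Complex.ofReal_mul, Complex.real_smul]) M

theorem map_ofReal_nonsing_inv [Fintype ι] [DecidableEq ι] {M : Matrix ι ι ℝ}
    (hM : IsUnit M.det) : M⁻¹.map ((↑) : ℝ → ℂ) = (M.map ((↑) : ℝ → ℂ))⁻¹ := by
  refine (inv_eq_left_inv ?_).symm
  rw [← map_ofReal_mul, nonsing_inv_mul _ hM,
    Matrix.map_one _ Complex.ofReal_zero Complex.ofReal_one]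

theorem PosSemidef.map_ofReal [Fintype ι] [DecidableEq ι] {M : Matrix ι ι ℝ}
    (hM : M.PosSemidef) : (M.map ((↑) : ℝ → ℂ)).PosSemidef := by
  obtain ⟨R, rfl⟩ := CStarAlgebra.nonneg_iff_eq_star_mul_self.mp hM.nonneg
  rw [star_eq_conjTranspose, conjTranspose_eq_transpose_of_trivial, map_ofReal_mul,
    map_ofReal_transpose]
  exact posSemidef_conjTranspose_mul_self _

theorem PosDef.map_ofReal [Fintype ι] [DecidableEq ι] {M : Matrix ι ι ℝ} (hM : M.PosDef) :
    (M.map ((↑) : ℝ → ℂ)).PosDef :=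
  hM.posSemidef.map_ofReal.posDef_iff_isUnit.mpr (hM.isUnit.map Complex.ofRealHom.mapMatrix)

end OfReal

section StarField

variable {ι κ ρ K : Type*} [Fintype ι] [Fintype κ] [Fintype ρ] [Field K] [StarRing K]

theorem star_mulVec_dotProduct (M : Matrix ρ ι K) (a : ι → K) (b : ρ → K) :
    star (M *ᵥ a) ⬝ᵥ b = star a ⬝ᵥ (Mᴴ *ᵥ b) := by
  rw [star_mulVec, dotProduct_mulVec]

theorem star_dotProduct_lyapunov_mulVec [DecidableEq ι] {A X : Matrix ι ι K} {B : Matrix ι κ K}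
    {μ : K} {x : ι → K} {u : κ → K} (hμ : star μ = -μ) (hx : (μ • 1 - A) *ᵥ x = B *ᵥ u) :
    star x ⬝ᵥ ((X * A + Aᴴ * X) *ᵥ x)
      = -(star x ⬝ᵥ (X *ᵥ (B *ᵥ u)) + star u ⬝ᵥ (Bᴴ *ᵥ (X *ᵥ x))) := by
  have hAx : A *ᵥ x = μ • x - B *ᵥ u := by
    rw [← hx, sub_mulVec, smul_mulVec, one_mulVec, sub_sub_cancel]
  rw [add_mulVec, ← mulVec_mulVec, ← mulVec_mulVec, dotProduct_add, ← star_mulVec_dotProduct, hAx]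
  simp only [mulVec_sub, mulVec_smul, star_sub, star_smul, hμ, dotProduct_sub, sub_dotProduct,
    dotProduct_smul, smul_dotProduct, star_mulVec_dotProduct, smul_eq_mul, neg_mul]
  ring

theorem star_sub_dotProduct_mulVec_sub [DecidableEq κ] {W : Matrix κ κ K} (hW : W.IsHermitian)
    (hdet : IsUnit W.det) (w u : κ → K) :
    star (W⁻¹ *ᵥ w - u) ⬝ᵥ (W *ᵥ (W⁻¹ *ᵥ w - u))
      = star w ⬝ᵥ (W⁻¹ *ᵥ w) - star w ⬝ᵥ u - star u ⬝ᵥ w + star u ⬝ᵥ (W *ᵥ u) := by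
  have hinv : W⁻¹ᴴ = W⁻¹ := by rw [conjTranspose_nonsing_inv, hW.eq]
  rw [mulVec_sub, mulVec_mulVec, mul_nonsing_inv _ hdet, one_mulVec, star_sub, sub_dotProduct,
    dotProduct_sub, dotProduct_sub, star_mulVec_dotProduct, star_mulVec_dotProduct, hinv,
    mulVec_mulVec u W⁻¹, nonsing_inv_mul _ hdet, one_mulVec]
  ring

theorem star_dotProduct_self_eq_riccati [DecidableEq ι] [DecidableEq κ] {A X : Matrix ι ι K}
    {B : Matrix ι κ K} {C : Matrix ρ ι K} {D : Matrix ρ κ K} {W : Matrix κ κ K} {μ : K}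
    {x : ι → K} {u : κ → K} (hX : X.IsHermitian) (hW : W.IsHermitian) (hdet : IsUnit W.det)
    (hμ : star μ = -μ) (hx : (μ • 1 - A) *ᵥ x = B *ᵥ u) :
    star (C *ᵥ x + D *ᵥ u) ⬝ᵥ (C *ᵥ x + D *ᵥ u)
      = star u ⬝ᵥ ((W + Dᴴ * D) *ᵥ u)
        + star x ⬝ᵥ ((X * A + Aᴴ * X + Cᴴ * C
            + (X * B + Cᴴ * D) * W⁻¹ * (Bᴴ * X + Dᴴ * C)) *ᵥ x)
        - star (W⁻¹ *ᵥ ((Bᴴ * X + Dᴴ * C) *ᵥ x) - u)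
            ⬝ᵥ (W *ᵥ (W⁻¹ *ᵥ ((Bᴴ * X + Dᴴ * C) *ᵥ x) - u)) := by
  rw [star_sub_dotProduct_mulVec_sub hW hdet, add_mulVec _ (_ * _ * _),
    add_mulVec (X * A + Aᴴ * X), dotProduct_add (star x), dotProduct_add (star x),
    star_dotProduct_lyapunov_mulVec hμ hx]
  simp only [add_mulVec, ← mulVec_mulVec, mulVec_add, dotProduct_add, add_dotProduct,
    star_add, star_mulVec_dotProduct, conjTranspose_conjTranspose, hX.eq]
  ring

end StarField

section RCLike

variable {ι κ ρ 𝕜 : Type*} [Fintype ι] [Fintype κ] [Fintype ρ] [DecidableEq ι] [DecidableEq κ]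
  [RCLike 𝕜] {A X : Matrix ι ι 𝕜} {B : Matrix ι κ 𝕜} {C : Matrix ρ ι 𝕜} {D : Matrix ρ κ 𝕜}
  {r : ℝ} {μ : 𝕜} {u : κ → 𝕜}

theorem smul_star_dotProduct_lt_of_riccati {x : ι → 𝕜} (hX : X.IsHermitian)
    (hD : (Dᴴ * D - r • 1).PosDef)
    (hM : (X * A + Aᴴ * X + Cᴴ * C
      + (X * B + Cᴴ * D) * (r • 1 - Dᴴ * D)⁻¹ * (Bᴴ * X + Dᴴ * C)).PosDef)
    (hμ : star μ = -μ) (hx : (μ • 1 - A) *ᵥ x = B *ᵥ u) (hu : u ≠ 0) :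
    r • (star u ⬝ᵥ u) < star (C *ᵥ x + D *ᵥ u) ⬝ᵥ (C *ᵥ x + D *ᵥ u) := by
  set W : Matrix κ κ 𝕜 := r • 1 - Dᴴ * D
  have hnegW : -W = Dᴴ * D - r • 1 := neg_sub _ _
  have hW : W.IsHermitian := by simpa [hnegW] using hD.isHermitian.neg
  have hdet : IsUnit W.det := (isUnit_iff_isUnit_det W).mp (by simpa [hnegW] using hD.isUnit.neg)
  rw [star_dotProduct_self_eq_riccati hX hW hdet hμ hx, sub_add_cancel, smul_mulVec, one_mulVec,
    dotProduct_smul, sub_eq_add_neg, ← dotProduct_neg, ← neg_mulVec, hnegW, add_assoc]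
  refine lt_add_of_pos_right _ ?_
  rcases eq_or_ne x 0 with rfl | hx0
  · simpa only [mulVec_zero, dotProduct_zero, zero_add, zero_sub, star_neg, mulVec_neg,
      dotProduct_neg, neg_dotProduct, neg_neg] using hD.dotProduct_mulVec_pos hu
  · exact add_pos_of_pos_of_nonneg (hM.dotProduct_mulVec_pos hx0)
      (hD.posSemidef.dotProduct_mulVec_nonneg _)

theorem smul_star_dotProduct_lt_transfer_of_riccati (hX : X.IsHermitian)
    (hD : (Dᴴ * D - r • 1).PosDef)
    (hM : (X * A + Aᴴ * X + Cᴴ * C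
      + (X * B + Cᴴ * D) * (r • 1 - Dᴴ * D)⁻¹ * (Bᴴ * X + Dᴴ * C)).PosDef)
    (hμ : star μ = -μ) (hres : IsUnit (μ • 1 - A)) (hu : u ≠ 0) :
    r • (star u ⬝ᵥ u)
      < star ((C * (μ • 1 - A)⁻¹ * B + D) *ᵥ u) ⬝ᵥ ((C * (μ • 1 - A)⁻¹ * B + D) *ᵥ u) := by
  have hx : (μ • 1 - A) *ᵥ ((μ • 1 - A)⁻¹ *ᵥ (B *ᵥ u)) = B *ᵥ u := by
    rw [mulVec_mulVec, mul_nonsing_inv _ ((isUnit_iff_isUnit_det _).mp hres), one_mulVec]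
  rw [add_mulVec, ← mulVec_mulVec, ← mulVec_mulVec]
  exact smul_star_dotProduct_lt_of_riccati hX hD hM hμ hx hu

end RCLike

end Matrix

theorem isUnit_smul_one_sub_of_forall_spectrum_re_neg {R : Type*} [Ring R] [Algebra ℂ R] {a : R}
    (ha : ∀ μ ∈ spectrum ℂ a, μ.re < 0) {z : ℂ} (hz : 0 ≤ z.re) : IsUnit (z • 1 - a) := by
  have hz' : z ∉ spectrum ℂ a := fun h => (ha z h).not_ge hz
  rwa [spectrum.mem_iff, not_not, Algebra.algebraMap_eq_smul_one] at hz'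

theorem EuclideanSpace.norm_toLp_sq {ι 𝕜 : Type*} [Fintype ι] [RCLike 𝕜] (v : ι → 𝕜) :
    (‖WithLp.toLp 2 v‖ : 𝕜) ^ 2 = star v ⬝ᵥ v := by
  rw [← inner_self_eq_norm_sq_to_K, EuclideanSpace.inner_toLp_toLp, dotProduct_comm]

theorem hminus_index_sufficiency_general {n m p : ℕ}
    (A : Matrix (Fin n) (Fin n) ℝ) (B : Matrix (Fin n) (Fin m) ℝ)
    (C : Matrix (Fin p) (Fin n) ℝ) (D : Matrix (Fin p) (Fin m) ℝ)
    (X : Matrix (Fin n) (Fin n) ℝ) (γ : ℝ)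
    (hA : ∀ μ ∈ spectrum ℂ (A.map (Complex.ofReal)), μ.re < 0)
    (hD : (Dᵀ * D - γ ^ 2 • (1 : Matrix (Fin m) (Fin m) ℝ)).PosDef)
    (hX : X.IsHermitian)
    (hIneq : (X * A + Aᵀ * X + Cᵀ * C
        + (X * B + Cᵀ * D) * (γ ^ 2 • (1 : Matrix (Fin m) (Fin m) ℝ) - Dᵀ * D)⁻¹
          * (Bᵀ * X + Dᵀ * C)).PosDef) :
    ∀ ω : ℝ, ∀ u : EuclideanSpace ℂ (Fin m), ‖u‖ = 1 →
      γ < ‖(WithLp.equiv 2 (Fin p → ℂ)).symm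
        (((C.map Complex.ofReal
            * ((Complex.I * ω) • (1 : Matrix (Fin n) (Fin n) ℂ)
                - A.map Complex.ofReal)⁻¹
            * B.map Complex.ofReal + D.map Complex.ofReal)).mulVec u)‖ := by
  intro ω u hu
  have hunit : star u.ofLp ⬝ᵥ u.ofLp = 1 := by
    rw [← EuclideanSpace.norm_toLp_sq, WithLp.toLp_ofLp, hu]
    simp
  have hWdet : IsUnit (γ ^ 2 • (1 : Matrix (Fin m) (Fin m) ℝ) - Dᵀ * D).det :=
    (isUnit_iff_isUnit_det _).mp (by simpa using hD.isUnit.neg)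
  have hD' := hD.map_ofReal
  have hM' := hIneq.map_ofReal
  simp only [Matrix.map_add _ Complex.ofReal_add, Matrix.map_sub _ Complex.ofReal_sub,
    map_ofReal_mul, map_ofReal_transpose, map_ofReal_smul, map_ofReal_nonsing_inv hWdet,
    Matrix.map_one _ Complex.ofReal_zero Complex.ofReal_one] at hD' hM'
  have hu0 : u.ofLp ≠ 0 := fun h => by simp [h] at hunit
  have hres := isUnit_smul_one_sub_of_forall_spectrum_re_neg hA (z := Complex.I * ω) (by simp)
  have hlt := smul_star_dotProduct_lt_transfer_of_riccati
    (hX.map _ fun a => (Complex.conj_ofReal a).symm) hD' hM' (by simp) hres hu0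
  rw [hunit, ← EuclideanSpace.norm_toLp_sq] at hlt
  rw [WithLp.equiv_symm_apply]
  refine lt_of_pow_lt_pow_left₀ 2 (norm_nonneg _) ?_
  rw [← Complex.real_lt_real]
  simpa using hlt

/-- Sufficiency direction of Lemma 2 (H₋ index): if `A` is Hurwitz, `Dᵀ D − γ² I ≻ 0`,
and a symmetric `X` satisfies the Riccati-type inequality, then at every frequency `ω`
and for every unit vector `u ∈ ℂ^m`, `‖G(iω) u‖ > γ` where
`G(iω) = C(iωI − A)⁻¹ B + D`. -/
theorem hminus_index_sufficiency {n m p : ℕ}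
    (A : Matrix (Fin n) (Fin n) ℝ) (B : Matrix (Fin n) (Fin m) ℝ)
    (C : Matrix (Fin p) (Fin n) ℝ) (D : Matrix (Fin p) (Fin m) ℝ)
    (X : Matrix (Fin n) (Fin n) ℝ) (γ : ℝ)
    (hA : ∀ μ ∈ spectrum ℂ (A.map (Complex.ofReal)), μ.re < 0)
    (hγ : 0 < γ)
    (hD : (Dᵀ * D - γ ^ 2 • (1 : Matrix (Fin m) (Fin m) ℝ)).PosDef)
    (hX : X.IsHermitian)
    (hIneq : (X * A + Aᵀ * X + Cᵀ * C
        + (X * B + Cᵀ * D) * (γ ^ 2 • (1 : Matrix (Fin m) (Fin m) ℝ) - Dᵀ * D)⁻¹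
          * (Bᵀ * X + Dᵀ * C)).PosDef) :
    ∀ ω : ℝ, ∀ u : EuclideanSpace ℂ (Fin m), ‖u‖ = 1 →
      γ < ‖(WithLp.equiv 2 (Fin p → ℂ)).symm
        (((C.map Complex.ofReal
            * ((Complex.I * ω) • (1 : Matrix (Fin n) (Fin n) ℂ)
                - A.map Complex.ofReal)⁻¹
            * B.map Complex.ofReal + D.map Complex.ofReal)).mulVec u)‖ :=
  hminus_index_sufficiency_general A B C D X γ hA hD hX hIneq
end
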